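/- arXiv:1811.03366 — 2 statements merged into one kernel-verified Lean document; each statement's English description precedes it below -/
import Mathlib

section
/- Let Ω ⊆ ℝ² be open, let w : ℝ² → ℂ be twice continuously differentiable on Ω, and let λ, h, k ∈ ℂ with k ≠ 0, h² + λ² = k², and ∂₁∂₁w + ∂₂∂₂w + λ²w = 0 on Ω. Define on Ω × ℝ the fields M(x) = (∂₂w(x̂), −∂₁w(x̂), 0)·e^{i h x₃} and N(x) = (1/k)·(i h ∂₁w(x̂), i h ∂₂w(x̂), λ² w(x̂))·e^{i h x₃}, where x = (x̂, x₃) with x̂ ∈ ℝ². Then curl M = k·N and curl N = k·M at every point of Ω × ℝ. -/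
/-- Partial derivative in the `i`-th coordinate direction of a function on `ℝ²`. -/
noncomputable def pd2 (i : Fin 2) (f : (Fin 2 → ℝ) → ℂ) (x : Fin 2 → ℝ) : ℂ :=
  fderiv ℝ f x (Pi.single i 1)

/-- Partial derivative in the `i`-th coordinate direction of a function on `ℝ³`. -/
noncomputable def pd3 (i : Fin 3) (f : (Fin 3 → ℝ) → ℂ) (x : Fin 3 → ℝ) : ℂ :=
  fderiv ℝ f x (Pi.single i 1)

/-- The curl of a complex vector field on `ℝ³`. -/
noncomputable def curl3 (F : (Fin 3 → ℝ) → Fin 3 → ℂ) (x : Fin 3 → ℝ) : Fin 3 → ℂ :=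
  ![pd3 1 (fun y => F y 2) x - pd3 2 (fun y => F y 1) x,
    pd3 2 (fun y => F y 0) x - pd3 0 (fun y => F y 2) x,
    pd3 0 (fun y => F y 1) x - pd3 1 (fun y => F y 0) x]

/-! A field `P(x̂) e^{i h x₃}` has curl of the same form: `∂₃` acts on it as multiplication by
`i h`, so its curl is `e^{i h x₃}` times the curl of `P` with `∂₃` replaced by `i h`. For the
profile `(∂₂w, -∂₁w, 0)` of `M` the first two components of that curl are those of `k N` on the
nose, and the third is `-Δw = λ² w` by the Helmholtz equation. For the profile of `N` the first two
components reduce to `k M` through `h² + λ² = k²` and `i² = -1`, while the third is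
`(i h / k)(∂₁∂₂w - ∂₂∂₁w) = 0` because `w` is `C²`. -/

open Complex

section PartialDerivatives

lemma pd2_const (c : ℂ) (q : Fin 2 → ℝ) (i : Fin 2) : pd2 i (fun _ => c) q = 0 := by
  simp [pd2]

lemma pd2_neg (f : (Fin 2 → ℝ) → ℂ) (q : Fin 2 → ℝ) (i : Fin 2) :
    pd2 i (fun p => -f p) q = -pd2 i f q := by
  simp [pd2, fderiv_fun_neg]

lemma pd2_const_mul (c : ℂ) (f : (Fin 2 → ℝ) → ℂ) (q : Fin 2 → ℝ) (i : Fin 2) :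
    pd2 i (fun p => c * f p) q = c * pd2 i f q := by
  rw [pd2, show (fun p => c * f p) = c • f from rfl, fderiv_const_smul_field]
  rfl

variable {f : (Fin 2 → ℝ) → ℂ} {q : Fin 2 → ℝ}

lemma ContDiffAt.differentiableAt_pd2 (hf : ContDiffAt ℝ 2 f q) (i : Fin 2) :
    DifferentiableAt ℝ (pd2 i f) q :=
  ((hf.fderiv_right (m := 1) le_rfl).differentiableAt one_ne_zero).clm_apply
    (differentiableAt_const _)

lemma ContDiffAt.pd2_pd2_comm (hf : ContDiffAt ℝ 2 f q) (i j : Fin 2) :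
    pd2 i (pd2 j f) q = pd2 j (pd2 i f) q := by
  have hsnd : ∀ i j : Fin 2,
      pd2 i (pd2 j f) q = fderiv ℝ (fderiv ℝ f) q (Pi.single i 1) (Pi.single j 1) := by
    intro i j
    unfold pd2
    rw [fderiv_clm_apply ((hf.fderiv_right (m := 1) le_rfl).differentiableAt one_ne_zero)
      (differentiableAt_const _)]
    simp
  rw [hsnd, hsnd]
  exact hf.isSymmSndFDerivAt (by simp) _ _

end PartialDerivatives

section GuidedMode

noncomputable def transverseProj : (Fin 3 → ℝ) →L[ℝ] (Fin 2 → ℝ) :=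
  ContinuousLinearMap.pi fun i => ContinuousLinearMap.proj (Fin.castSucc i)

lemma transverseProj_apply (y : Fin 3 → ℝ) : transverseProj y = ![y 0, y 1] := by
  ext i; fin_cases i <;> rfl

noncomputable def axialCoord : (Fin 3 → ℝ) →L[ℝ] ℂ :=
  ofRealCLM.comp (ContinuousLinearMap.proj 2)

noncomputable def guidedMode (h : ℂ) (f : (Fin 2 → ℝ) → ℂ) (y : Fin 3 → ℝ) : ℂ :=
  f ![y 0, y 1] * exp (I * h * y 2)

variable {f : (Fin 2 → ℝ) → ℂ} (h : ℂ) {x : Fin 3 → ℝ}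

lemma hasFDerivAt_guidedMode (hf : DifferentiableAt ℝ f ![x 0, x 1]) :
    HasFDerivAt (guidedMode h f)
      (exp (I * h * x 2) • (fderiv ℝ f ![x 0, x 1]).comp transverseProj +
        (I * h * guidedMode h f x) • axialCoord) x := by
  have hprofile : HasFDerivAt (fun y : Fin 3 → ℝ => f ![y 0, y 1])
      ((fderiv ℝ f ![x 0, x 1]).comp transverseProj) x := by
    simp only [← transverseProj_apply] at hf ⊢
    exact hf.hasFDerivAt.comp x transverseProj.hasFDerivAt
  have hphase : HasFDerivAt (fun y : Fin 3 → ℝ => exp (I * h * y 2))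
      (exp (I * h * x 2) • (I * h) • axialCoord) x :=
    (axialCoord.hasFDerivAt.const_mul (I * h)).cexp
  refine (hprofile.mul hphase).congr_fderiv ?_
  rw [smul_smul, smul_smul, add_comm, guidedMode]
  ring_nf

lemma pd3_guidedMode_castSucc (hf : DifferentiableAt ℝ f ![x 0, x 1]) (i : Fin 2) :
    pd3 i.castSucc (guidedMode h f) x = exp (I * h * x 2) * pd2 i f ![x 0, x 1] := by
  have hproj : transverseProj (Pi.single i.castSucc 1) = Pi.single i 1 := by
    ext j; fin_cases i <;> fin_cases j <;> rfl
  have haxial : axialCoord (Pi.single i.castSucc 1) = 0 := by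
    fin_cases i <;> simp [axialCoord]
  simp [pd3, (hasFDerivAt_guidedMode h hf).fderiv, hproj, haxial, pd2]

lemma pd3_guidedMode_two (hf : DifferentiableAt ℝ f ![x 0, x 1]) :
    pd3 2 (guidedMode h f) x = exp (I * h * x 2) * (I * h * f ![x 0, x 1]) := by
  have hproj : transverseProj (Pi.single 2 1) = 0 := by
    ext j; fin_cases j <;> rfl
  simp [pd3, (hasFDerivAt_guidedMode h hf).fderiv, hproj, axialCoord, guidedMode,
    mul_comm, mul_assoc, mul_left_comm]

end GuidedMode

section GuidedField

noncomputable def guidedField (h : ℂ) (P : (Fin 2 → ℝ) → Fin 3 → ℂ) (y : Fin 3 → ℝ) :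
    Fin 3 → ℂ :=
  fun i => guidedMode h (fun q => P q i) y

lemma guidedField_apply (h : ℂ) (P : (Fin 2 → ℝ) → Fin 3 → ℂ) (y : Fin 3 → ℝ) :
    guidedField h P y = exp (I * h * y 2) • P ![y 0, y 1] := by
  ext i; exact mul_comm _ _

/-- The curl with `∂₃` replaced by multiplication by `i h`. -/
noncomputable def curlProfile (h : ℂ) (P : (Fin 2 → ℝ) → Fin 3 → ℂ) (q : Fin 2 → ℝ) :
    Fin 3 → ℂ :=
  ![pd2 1 (fun p => P p 2) q - I * h * P q 1,
    I * h * P q 0 - pd2 0 (fun p => P p 2) q,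
    pd2 0 (fun p => P p 1) q - pd2 1 (fun p => P p 0) q]

lemma curl3_guidedField {P : (Fin 2 → ℝ) → Fin 3 → ℂ} (h : ℂ) {x : Fin 3 → ℝ}
    (hP : ∀ i, DifferentiableAt ℝ (fun q => P q i) ![x 0, x 1]) :
    curl3 (guidedField h P) x = exp (I * h * x 2) • curlProfile h P ![x 0, x 1] := by
  have hd0 i : pd3 0 (guidedMode h fun q => P q i) x = _ :=
    pd3_guidedMode_castSucc h (hP i) 0
  have hd1 i : pd3 1 (guidedMode h fun q => P q i) x = _ :=
    pd3_guidedMode_castSucc h (hP i) 1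
  have hd2 i := pd3_guidedMode_two h (hP i)
  simp only [curl3, guidedField, hd0, hd1, hd2, curlProfile, Matrix.smul_cons, Matrix.smul_empty,
    smul_eq_mul, mul_sub]

end GuidedField

section WaveguideModes

variable {w : (Fin 2 → ℝ) → ℂ} {q : Fin 2 → ℝ}

noncomputable def mProfile (w : (Fin 2 → ℝ) → ℂ) (q : Fin 2 → ℝ) : Fin 3 → ℂ :=
  ![pd2 1 w q, -pd2 0 w q, 0]

noncomputable def nProfile (lam h k : ℂ) (w : (Fin 2 → ℝ) → ℂ) (q : Fin 2 → ℝ) : Fin 3 → ℂ :=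
  (1 / k) • ![I * h * pd2 0 w q, I * h * pd2 1 w q, lam ^ 2 * w q]

lemma differentiableAt_mProfile (hw : ContDiffAt ℝ 2 w q) (i : Fin 3) :
    DifferentiableAt ℝ (fun p => mProfile w p i) q := by
  fin_cases i
  exacts [hw.differentiableAt_pd2 1, (hw.differentiableAt_pd2 0).neg, differentiableAt_const _]

lemma differentiableAt_nProfile (lam h k : ℂ) (hw : ContDiffAt ℝ 2 w q) (i : Fin 3) :
    DifferentiableAt ℝ (fun p => nProfile lam h k w p i) q := by
  fin_cases i
  exacts [((hw.differentiableAt_pd2 0).const_mul _).const_mul _,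
    ((hw.differentiableAt_pd2 1).const_mul _).const_mul _,
    ((hw.differentiableAt two_ne_zero).const_mul _).const_mul _]

lemma curlProfile_mProfile {lam k : ℂ} (h : ℂ) (hk : k ≠ 0)
    (hHelm : pd2 0 (pd2 0 w) q + pd2 1 (pd2 1 w) q + lam ^ 2 * w q = 0) :
    curlProfile h (mProfile w) q = k • nProfile lam h k w q := by
  ext i
  fin_cases i
  · show pd2 1 (fun _ => 0) q - I * h * -pd2 0 w q = k * (1 / k * (I * h * pd2 0 w q))
    rw [pd2_const]
    field_simp
    ring
  · show I * h * pd2 1 w q - pd2 0 (fun _ => 0) q = k * (1 / k * (I * h * pd2 1 w q))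
    rw [pd2_const]
    field_simp
    ring
  · show pd2 0 (fun p => -pd2 0 w p) q - pd2 1 (pd2 1 w) q = k * (1 / k * (lam ^ 2 * w q))
    rw [pd2_neg]
    field_simp
    linear_combination -hHelm

lemma curlProfile_nProfile {lam h k : ℂ} (hk : k ≠ 0) (hrel : h ^ 2 + lam ^ 2 = k ^ 2)
    (hw : ContDiffAt ℝ 2 w q) :
    curlProfile h (nProfile lam h k w) q = k • mProfile w q := by
  ext i
  fin_cases i
  · show pd2 1 (fun p => 1 / k * (lam ^ 2 * w p)) q - I * h * (1 / k * (I * h * pd2 1 w q)) =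
      k * pd2 1 w q
    rw [pd2_const_mul, pd2_const_mul]
    field_simp
    linear_combination pd2 1 w q * hrel - h ^ 2 * pd2 1 w q * I_sq
  · show I * h * (1 / k * (I * h * pd2 0 w q)) - pd2 0 (fun p => 1 / k * (lam ^ 2 * w p)) q =
      k * -pd2 0 w q
    rw [pd2_const_mul, pd2_const_mul]
    field_simp
    linear_combination -pd2 0 w q * hrel + h ^ 2 * pd2 0 w q * I_sq
  · show pd2 0 (fun p => 1 / k * (I * h * pd2 1 w p)) q -
        pd2 1 (fun p => 1 / k * (I * h * pd2 0 w p)) q = k * 0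
    rw [pd2_const_mul, pd2_const_mul, pd2_const_mul, pd2_const_mul, hw.pd2_pd2_comm]
    ring

end WaveguideModes

/-- The two families of waveguide modes are intertwined by the curl:
`curl M = k·N` and `curl N = k·M`. -/
theorem curl_waveguide_modes (Ω : Set (Fin 2 → ℝ)) (hΩ : IsOpen Ω)
    (w : (Fin 2 → ℝ) → ℂ) (hw : ContDiffOn ℝ 2 w Ω)
    (lam h k : ℂ) (hk : k ≠ 0) (hrel : h ^ 2 + lam ^ 2 = k ^ 2)
    (hHelm : ∀ xh ∈ Ω, pd2 0 (pd2 0 w) xh + pd2 1 (pd2 1 w) xh + lam ^ 2 * w xh = 0)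
    (M N : (Fin 3 → ℝ) → Fin 3 → ℂ)
    (hM : ∀ x : Fin 3 → ℝ, ∀ i : Fin 3, M x i =
      ![pd2 1 w ![x 0, x 1], -(pd2 0 w ![x 0, x 1]), 0] i
        * Complex.exp (Complex.I * h * ((x 2 : ℝ) : ℂ)))
    (hN : ∀ x : Fin 3 → ℝ, ∀ i : Fin 3, N x i =
      (1 / k) * ![Complex.I * h * pd2 0 w ![x 0, x 1],
                  Complex.I * h * pd2 1 w ![x 0, x 1],
                  lam ^ 2 * w ![x 0, x 1]] i
        * Complex.exp (Complex.I * h * ((x 2 : ℝ) : ℂ))) :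
    ∀ x : Fin 3 → ℝ, ![x 0, x 1] ∈ Ω →
      (∀ i, curl3 M x i = k * N x i) ∧ (∀ i, curl3 N x i = k * M x i) := by
  intro x hx
  have hw' : ContDiffAt ℝ 2 w ![x 0, x 1] := hw.contDiffAt (hΩ.mem_nhds hx)
  obtain rfl : M = guidedField h (mProfile w) := funext fun y => funext (hM y)
  obtain rfl : N = guidedField h (nProfile lam h k w) := funext fun y => funext (hN y)
  have hcurlM :
      curl3 (guidedField h (mProfile w)) x = k • guidedField h (nProfile lam h k w) x := by
    rw [curl3_guidedField h (differentiableAt_mProfile hw'),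
      curlProfile_mProfile h hk (hHelm _ hx), guidedField_apply, smul_comm]
  have hcurlN :
      curl3 (guidedField h (nProfile lam h k w)) x = k • guidedField h (mProfile w) x := by
    rw [curl3_guidedField h (differentiableAt_nProfile lam h k hw'),
      curlProfile_nProfile hk hrel hw', guidedField_apply, smul_comm]
  exact ⟨congrFun hcurlM, congrFun hcurlN⟩
end

section
/- Let k₀ > 0 be a real number and let (λ_m)_{m≥1} be a strictly increasing sequence of positive real numbers tending to +∞ with k₀ ∉ {λ_m : m ≥ 1}. Then there exist an open set U ⊆ ℂ containing k₀ and, for each m, a holomorphic function h_m : U → ℂ, such that: (a) h_m(k)² = k² − λ_m² for all k ∈ U and all m; (b) h_m(k₀) = h(k₀, λ_m), the branch square root of k₀² − λ_m²; and (c) sup_{m ≥ 1} sup_{k ∈ U} |h_m(k)|/λ_m < ∞. -/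
/-!
Since `λ_m → ∞` and no `λ_m` equals `k₀`, the gaps `|λ_m² − k₀²|` are bounded below by some
`η > 0`. On `U = {z | ‖z² − k₀²‖ < η}` the number `z² − λ_m²` (when `λ_m < k₀`), resp.
`λ_m² − z²` (when `λ_m > k₀`), stays within distance `|λ_m² − k₀²|` of a positive real, hence
in the slit plane, where the principal square root is holomorphic; the factor `i` in the second
case selects the branch of `branchSqrt`. The uniform bound comes from
`‖h_m(z)‖² = ‖z² − λ_m²‖ ≤ (‖z‖ + λ_m)²` and `λ_m ≥ min_n λ_n > 0`.
-/

open Filter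

/-- The branch square root of `k² − l²` with nonnegative real and imaginary parts:
`√(k²−l²)` if `l < k`, and `i·√(l²−k²)` if `l > k`. -/
noncomputable def branchSqrt (k l : ℝ) : ℂ :=
  if l < k then ((Real.sqrt (k ^ 2 - l ^ 2) : ℝ) : ℂ)
  else Complex.I * ((Real.sqrt (l ^ 2 - k ^ 2) : ℝ) : ℂ)

open Complex

theorem Filter.Tendsto.exists_pos_forall_le_abs_sub {ι β : Type*} [Nonempty ι]
    [AddCommGroup β] [LinearOrder β] [IsOrderedAddMonoid β] {u : ι → β} {a : β}
    (hu : Tendsto u cofinite atTop) (hne : ∀ i, u i ≠ a) : ∃ ε > 0, ∀ i, ε ≤ |u i - a| := by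
  obtain ⟨i₀, hi₀⟩ :=
    (tendsto_abs_atTop_atTop.comp (tendsto_atTop_add_const_right _ (-a) hu)).exists_forall_le
  exact ⟨|u i₀ - a|, abs_pos.mpr (sub_ne_zero.mpr (hne i₀)),
    fun i => by simpa [sub_eq_add_neg] using hi₀ i⟩

theorem Complex.sq_sqrt (a : ℂ) : a.sqrt ^ 2 = a :=
  cpow_ofNat_inv_pow a 2

theorem Complex.mem_slitPlane_of_norm_sub_lt {w : ℂ} {c : ℝ} (h : ‖w - c‖ < c) :
    w ∈ slitPlane := by
  refine mem_slitPlane_iff.mpr (Or.inl ?_)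
  have := (abs_re_le_norm (w - c)).trans_lt h
  rw [sub_re, ofReal_re] at this
  linarith [neg_abs_le (w.re - c)]

theorem Complex.norm_le_sqrt_of_norm_sq_sub_le {z w : ℂ} {r : ℝ} (h : ‖z ^ 2 - w‖ ≤ r) :
    ‖z‖ ≤ √(‖w‖ + r) := by
  have hsq : ‖z‖ ^ 2 ≤ ‖w‖ + r := by
    rw [← norm_pow]
    exact (norm_le_norm_add_norm_sub' _ w).trans (add_le_add_right h _)
  simpa using Real.abs_le_sqrt hsq

noncomputable def axialWavenumber (k l : ℝ) (z : ℂ) : ℂ :=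
  if l < k then Complex.sqrt (z ^ 2 - l ^ 2) else I * Complex.sqrt (l ^ 2 - z ^ 2)

theorem axialWavenumber_sq (k l : ℝ) (z : ℂ) : axialWavenumber k l z ^ 2 = z ^ 2 - l ^ 2 := by
  unfold axialWavenumber
  split_ifs
  · exact sq_sqrt _
  · rw [mul_pow, I_sq, sq_sqrt]
    ring

theorem norm_axialWavenumber_le (k l : ℝ) (z : ℂ) : ‖axialWavenumber k l z‖ ≤ ‖z‖ + |l| := by
  have hsq : ‖axialWavenumber k l z‖ ^ 2 ≤ (‖z‖ + |l|) ^ 2 :=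
    calc ‖axialWavenumber k l z‖ ^ 2 = ‖z ^ 2 - l ^ 2‖ := by rw [← norm_pow, axialWavenumber_sq]
      _ ≤ ‖z‖ ^ 2 + |l| ^ 2 :=
        (norm_sub_le _ _).trans_eq (by rw [norm_pow, norm_pow, norm_real, Real.norm_eq_abs])
      _ ≤ (‖z‖ + |l|) ^ 2 := by nlinarith [norm_nonneg z, abs_nonneg l]
  exact (pow_le_pow_iff_left₀ (norm_nonneg _) (by positivity) two_ne_zero).mp hsq

theorem axialWavenumber_ofReal {k l : ℝ} (hk : 0 ≤ k) (hl : 0 ≤ l) :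
    axialWavenumber k l k = branchSqrt k l := by
  unfold axialWavenumber branchSqrt
  split_ifs with h
  · have : (0 : ℝ) ≤ k ^ 2 - l ^ 2 := by nlinarith
    rw [← ofReal_pow, ← ofReal_pow, ← ofReal_sub, sqrt_of_nonneg (zero_le_real.mpr this),
      ofReal_re]
  · have : (0 : ℝ) ≤ l ^ 2 - k ^ 2 := by nlinarith
    rw [← ofReal_pow, ← ofReal_pow, ← ofReal_sub, sqrt_of_nonneg (zero_le_real.mpr this),
      ofReal_re]

theorem differentiableAt_axialWavenumber {k l : ℝ} (hk : 0 ≤ k) (hl : 0 ≤ l) {z : ℂ}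
    (hz : ‖z ^ 2 - k ^ 2‖ < |l ^ 2 - k ^ 2|) : DifferentiableAt ℂ (axialWavenumber k l) z := by
  unfold axialWavenumber
  rcases lt_or_ge l k with hlk | hkl
  · have hmem : z ^ 2 - l ^ 2 ∈ slitPlane := by
      refine mem_slitPlane_of_norm_sub_lt (c := k ^ 2 - l ^ 2) ?_
      rw [abs_of_neg (by nlinarith)] at hz
      push_cast
      convert hz using 2 <;> ring
    simp only [if_pos hlk]
    exact (differentiableAt_sqrt hmem).comp (f := fun z : ℂ => z ^ 2 - (l : ℂ) ^ 2) z
      (by fun_prop)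
  · have hkl' : k < l := lt_of_le_of_ne hkl fun heq => by
      rw [heq, sub_self, abs_zero] at hz
      exact (norm_nonneg _).not_gt hz
    have hmem : l ^ 2 - z ^ 2 ∈ slitPlane := by
      refine mem_slitPlane_of_norm_sub_lt (c := l ^ 2 - k ^ 2) ?_
      rw [abs_of_pos (by nlinarith)] at hz
      push_cast
      convert hz using 1
      rw [← norm_neg]
      ring_nf
    simp only [if_neg hkl.not_gt]
    exact ((differentiableAt_sqrt hmem).comp (f := fun z : ℂ => (l : ℂ) ^ 2 - z ^ 2) z
      (by fun_prop)).const_mul I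

theorem dtn_symbols_analytic_general (k₀ : ℝ) (hk : 0 < k₀)
    (lam : ℕ → ℝ) (hpos : ∀ m, 0 < lam m)
    (htop : Tendsto lam atTop atTop) (hne : ∀ m, lam m ≠ k₀) :
    ∃ U : Set ℂ, IsOpen U ∧ ((k₀ : ℝ) : ℂ) ∈ U ∧
      ∃ h : ℕ → ℂ → ℂ,
        (∀ m, DifferentiableOn ℂ (h m) U) ∧
        (∀ m, ∀ z ∈ U, (h m z) ^ 2 = z ^ 2 - ((lam m : ℝ) : ℂ) ^ 2) ∧
        (∀ m, h m ((k₀ : ℝ) : ℂ) = branchSqrt k₀ (lam m)) ∧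
        ∃ C : ℝ, ∀ m, ∀ z ∈ U, ‖h m z‖ / lam m ≤ C := by
  rw [← Nat.cofinite_eq_atTop] at htop
  obtain ⟨η, hη, hgap⟩ :=
    ((tendsto_pow_atTop two_ne_zero).comp htop).exists_pos_forall_le_abs_sub (a := k₀ ^ 2)
      fun m => by simpa [pow_left_inj₀ (hpos m).le hk.le two_ne_zero] using hne m
  obtain ⟨m₀, hm₀⟩ := htop.exists_forall_le
  set R := √(‖(k₀ : ℂ) ^ 2‖ + η)
  refine ⟨{z | ‖z ^ 2 - k₀ ^ 2‖ < η}, isOpen_lt (by fun_prop) continuous_const, by simpa using hη,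
    fun m => axialWavenumber k₀ (lam m), fun m z hz => ?_, fun m z _ => axialWavenumber_sq _ _ _,
    fun m => axialWavenumber_ofReal hk.le (hpos m).le, R / lam m₀ + 1, fun m z hz => ?_⟩
  · exact (differentiableAt_axialWavenumber hk.le (hpos m).le
      (hz.trans_le (hgap m))).differentiableWithinAt
  · calc ‖axialWavenumber k₀ (lam m) z‖ / lam m ≤ (R + lam m) / lam m :=
          div_le_div_of_nonneg_right ((norm_axialWavenumber_le _ _ z).trans
            (add_le_add (norm_le_sqrt_of_norm_sq_sub_le hz.le) (abs_of_pos (hpos m)).le))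
            (hpos m).le
      _ = R / lam m + 1 := by field_simp [(hpos m).ne']
      _ ≤ R / lam m₀ + 1 := by gcongr; exacts [hpos m₀, hm₀ m]

/-- There is a complex neighborhood `U` of a non-cut-off real wavenumber `k₀` on which
all the axial wavenumbers `h_m(k) = √(k² − λ_m²)` extend holomorphically, agreeing with
the branch square root at `k₀`, with a uniform bound `|h_m(k)| ≤ C·λ_m`. -/
theorem dtn_symbols_analytic (k₀ : ℝ) (hk : 0 < k₀)
    (lam : ℕ → ℝ) (hmono : StrictMono lam) (hpos : ∀ m, 0 < lam m)
    (htop : Tendsto lam atTop atTop) (hne : ∀ m, lam m ≠ k₀) :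
    ∃ U : Set ℂ, IsOpen U ∧ ((k₀ : ℝ) : ℂ) ∈ U ∧
      ∃ h : ℕ → ℂ → ℂ,
        (∀ m, DifferentiableOn ℂ (h m) U) ∧
        (∀ m, ∀ z ∈ U, (h m z) ^ 2 = z ^ 2 - ((lam m : ℝ) : ℂ) ^ 2) ∧
        (∀ m, h m ((k₀ : ℝ) : ℂ) = branchSqrt k₀ (lam m)) ∧
        ∃ C : ℝ, ∀ m, ∀ z ∈ U, ‖h m z‖ / lam m ≤ C :=
  dtn_symbols_analytic_general k₀ hk lam hpos htop hne
end
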